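/- Let t ≥ 1, let R be a d×t random matrix whose entries are i.i.d., each equal to +1/√t or −1/√t with probability 1/2, let S ∈ ℝ^{n×d} and T ∈ ℝ^{d×k} be real matrices, and let a > 0. Then Prob[ ‖ST − SRRᵀT‖_F ≥ a ] ≤ 2‖S‖_F²‖T‖_F² / (t·a²). -/

import Mathlib

open MeasureTheory
open scoped Matrix

/-- Frobenius norm of a real matrix. -/
noncomputable def frobNorm {m n : ℕ} (M : Matrix (Fin m) (Fin n) ℝ) : ℝ :=
  Real.sqrt (∑ i, ∑ j, (M i j) ^ 2)

/-- Spectral (operator) norm of a real matrix, viewed as a linear map between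
Euclidean spaces. -/
noncomputable def specNorm {m n : ℕ} (M : Matrix (Fin m) (Fin n) ℝ) : ℝ :=
  ‖LinearMap.toContinuousLinearMap (Matrix.toEuclideanLin M)‖

/-- `P` is the Moore–Penrose pseudoinverse of `M` (the four Penrose conditions;
such a `P` is unique). -/
def IsMoorePenrose {m n : ℕ} (M : Matrix (Fin m) (Fin n) ℝ)
    (P : Matrix (Fin n) (Fin m) ℝ) : Prop :=
  M * P * M = M ∧ P * M * P = P ∧ (M * P)ᵀ = M * P ∧ (P * M)ᵀ = P * M

/-- `X` is an `n × k` cluster indicator matrix: each row `i` has a single nonzero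
entry, in column `f i`, equal to `1/√(z_{f i})` where `z_j` is the number of rows
assigned to column `j`. -/
def IsIndicator {n k : ℕ} (X : Matrix (Fin n) (Fin k) ℝ) : Prop :=
  ∃ f : Fin n → Fin k, ∀ i j, X i j =
    if f i = j then 1 / Real.sqrt ((Finset.univ.filter fun i' => f i' = j).card) else 0

/-- The singular values of a `k × t` real matrix `M` (in some order): the square
roots of the eigenvalues of `M * Mᵀ`. -/
noncomputable def singVals {k t : ℕ} (M : Matrix (Fin k) (Fin t) ℝ) (i : Fin k) : ℝ :=
  Real.sqrt ((Matrix.isHermitian_mul_conjTranspose_self M).eigenvalues i)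

/-- The `d × t` random sign matrix with entries `±1/√t`, as a function of the
sample point `ω` (a `d × t` array of fair coins). -/
noncomputable def signMatrix (d t : ℕ) (ω : Fin d → Fin t → Bool) :
    Matrix (Fin d) (Fin t) ℝ :=
  Matrix.of fun i j => (if ω i j then (1 : ℝ) else -1) / Real.sqrt t

/-- The law of a `d × t` matrix of i.i.d. fair signs: the uniform probability
measure on all `d × t` sign patterns. -/
noncomputable def signMeasure (d t : ℕ) : Measure (Fin d → Fin t → Bool) :=
  (PMF.uniformOfFintype (Fin d → Fin t → Bool)).toMeasure


/-!
Write `ε_l ∈ {±1}ᵈ` for the `l`-th column of `√t R`. Then `R Rᵀ = 1 + t⁻¹ ∑_l (ε_l ε_lᵀ - 1)`,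
and `ε_l ε_lᵀ - 1` vanishes on the diagonal, so with `c_pq = S_ip T_qj` the `(i, j)` entry of
`ST - SRRᵀT` is `-t⁻¹ ∑_l ∑_{p ≠ q} c_pq ε_pl ε_ql`. The monomials `ε_pl ε_ql` with `p ≠ q` are
orthonormal: averaging a product of signs in which one sign occurs exactly once gives `0`, as
flipping that sign shows. Hence the second moment of the entry is
`t⁻¹ ∑_{p ≠ q} c_pq (c_pq + c_qp) ≤ 2 t⁻¹ ∑_{p,q} c_pq²`, and summing over `i, j` gives
`E ‖ST - SRRᵀT‖_F² ≤ 2 ‖S‖_F² ‖T‖_F² / t`. Markov's inequality for `‖ST - SRRᵀT‖_F²` concludes.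
-/

lemma meas_ge_le_integral_sq_div_sq {Ω : Type*} [MeasurableSpace Ω] (μ : Measure Ω)
    [IsFiniteMeasure μ] {f : Ω → ℝ} (hf : Integrable (fun ω => f ω ^ 2) μ) {a : ℝ} (ha : 0 < a) :
    μ {ω | a ≤ f ω} ≤ ENNReal.ofReal ((∫ ω, f ω ^ 2 ∂μ) / a ^ 2) :=
  calc μ {ω | a ≤ f ω} ≤ μ {ω | a ^ 2 ≤ f ω ^ 2} :=
        measure_mono fun ω (h : a ≤ f ω) => show a ^ 2 ≤ f ω ^ 2 from pow_le_pow_left₀ ha.le h 2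
    _ = ENNReal.ofReal (μ.real {ω | a ^ 2 ≤ f ω ^ 2}) :=
        (ofReal_measureReal (measure_ne_top _ _)).symm
    _ ≤ ENNReal.ofReal ((∫ ω, f ω ^ 2 ∂μ) / a ^ 2) :=
        ENNReal.ofReal_le_ofReal <| (le_div_iff₀' (by positivity)).2 <|
          mul_meas_ge_le_integral_of_nonneg (ae_of_all _ fun ω => sq_nonneg _) hf _

lemma integral_uniformOfFintype {Ω : Type*} [Fintype Ω] [Nonempty Ω] [MeasurableSpace Ω]
    [MeasurableSingletonClass Ω] (f : Ω → ℝ) :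
    ∫ ω, f ω ∂(PMF.uniformOfFintype Ω).toMeasure = (Fintype.card Ω : ℝ)⁻¹ * ∑ ω, f ω := by
  simp [PMF.integral_eq_sum, Finset.mul_sum]

lemma sum_sq_sum_mul_eq {Ω ι : Type*} [Fintype Ω] [Fintype ι] (a : ι → ℝ) (Z : Ω → ι → ℝ) :
    ∑ ω, (∑ x, a x * Z ω x) ^ 2 = ∑ x, ∑ y, a x * a y * ∑ ω, Z ω x * Z ω y := by
  simp only [sq, Finset.sum_mul_sum]
  simp only [Finset.mul_sum]
  rw [Finset.sum_comm]
  refine Finset.sum_congr rfl fun x _ => ?_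
  rw [Finset.sum_comm]
  exact Finset.sum_congr rfl fun y _ => Finset.sum_congr rfl fun ω _ => by ring

namespace RandomSign

def boolSign (b : Bool) : ℝ := if b then 1 else -1

lemma boolSign_mul_self (b : Bool) : boolSign b * boolSign b = 1 := by
  cases b <;> norm_num [boolSign]

lemma sum_mul_ite_transpose_pair {α : Type*} [Fintype α] [DecidableEq α] (c : α → α → ℝ)
    (p q : α) :
    ∑ u, ∑ v, c u v * (if p ≠ q ∧ (u = p ∧ v = q ∨ u = q ∧ v = p) then 1 else 0) =
      if p = q then 0 else c p q + c q p := by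
  by_cases hpq : p = q
  · simp [hpq]
  have h : ∀ u v, (if p ≠ q ∧ (u = p ∧ v = q ∨ u = q ∧ v = p) then (1 : ℝ) else 0) =
      (if u = p then if v = q then 1 else 0 else 0) +
        (if u = q then if v = p then 1 else 0 else 0) := by
    intro u v
    split_ifs <;> grind
  simp_rw [h, mul_add, mul_ite, mul_one, mul_zero, Finset.sum_add_distrib]
  simp [hpq]

lemma sum_offDiag_mul_add_transpose_le {α : Type*} [Fintype α] [DecidableEq α]
    (c : α → α → ℝ) :
    ∑ p, ∑ q, (if p = q then 0 else c p q * (c p q + c q p)) ≤ 2 * ∑ p, ∑ q, c p q ^ 2 :=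
  calc ∑ p, ∑ q, (if p = q then 0 else c p q * (c p q + c q p))
      ≤ ∑ p, ∑ q, (c p q ^ 2 + (c p q ^ 2 + c q p ^ 2) / 2) := by
        gcongr with p _ q _
        split_ifs with hpq
        · subst hpq; positivity
        · nlinarith [two_mul_le_add_sq (c p q) (c q p)]
    _ = 2 * ∑ p, ∑ q, c p q ^ 2 := by
        simp only [Finset.sum_add_distrib, ← Finset.sum_div]
        rw [Finset.sum_comm (f := fun p q => c q p ^ 2)]
        ring

variable {α β : Type*} [DecidableEq α] [DecidableEq β]

def flipAt (p : α) (l : β) (ω : α → β → Bool) : α → β → Bool :=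
  fun i j => if i = p ∧ j = l then !ω i j else ω i j

lemma flipAt_involutive (p : α) (l : β) : Function.Involutive (flipAt p l) := by
  intro ω
  funext i j
  by_cases h : i = p ∧ j = l <;> simp [flipAt, h]

lemma boolSign_flipAt (ω : α → β → Bool) (p i : α) (l j : β) :
    boolSign (flipAt p l ω i j) =
      if i = p ∧ j = l then -boolSign (ω i j) else boolSign (ω i j) := by
  by_cases h : i = p ∧ j = l
  · obtain ⟨rfl, rfl⟩ := h
    cases h : ω i j <;> simp [flipAt, boolSign, h]
  · simp [flipAt, h]

variable [Fintype α] [Fintype β]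

lemma sum_eq_zero_of_flipAt_neg (p : α) (l : β) {f : (α → β → Bool) → ℝ}
    (hf : ∀ ω, f (flipAt p l ω) = -f ω) : ∑ ω, f ω = 0 := by
  have h := Equiv.sum_comp ((flipAt_involutive p l).toPerm _) f
  simp only [Function.Involutive.coe_toPerm, hf, Finset.sum_neg_distrib] at h
  linarith

/-- The entry `(p, q)` of `ε_l ε_lᵀ - 1`, where `ε_l` is the `l`-th column of signs. -/
def offDiagSign (ω : α → β → Bool) (p q : α) (l : β) : ℝ :=
  if p = q then 0 else boolSign (ω p l) * boolSign (ω q l)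

lemma sum_offDiagSign_mul (p q u v : α) (l m : β) :
    ∑ ω : α → β → Bool, offDiagSign ω p q l * offDiagSign ω u v m =
      if l = m ∧ p ≠ q ∧ (u = p ∧ v = q ∨ u = q ∧ v = p)
      then (Fintype.card (α → β → Bool) : ℝ) else 0 := by
  by_cases hpair : l = m ∧ p ≠ q ∧ (u = p ∧ v = q ∨ u = q ∧ v = p)
  · rw [if_pos hpair, Fintype.card_eq_sum_ones, Nat.cast_sum, Nat.cast_one]
    refine Finset.sum_congr rfl fun ω _ => ?_
    obtain ⟨rfl, hpq, ⟨rfl, rfl⟩ | ⟨rfl, rfl⟩⟩ := hpair <;>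
    · simp only [offDiagSign, hpq, Ne.symm hpq, if_false]
      grind [boolSign_mul_self]
  rw [if_neg hpair]
  by_cases hpq : p = q
  · simp [offDiagSign, hpq]
  by_cases huv : u = v
  · simp [offDiagSign, huv]
  -- some sign occurs exactly once in the product, and flipping it negates the summand
  by_cases hp : p = u ∧ l = m ∨ p = v ∧ l = m
  · refine sum_eq_zero_of_flipAt_neg q l fun ω => ?_
    have hq : ¬(q = u ∧ l = m ∨ q = v ∧ l = m) := by grind
    simp only [offDiagSign, hpq, huv, if_false, boolSign_flipAt]
    grind
  · refine sum_eq_zero_of_flipAt_neg p l fun ω => ?_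
    simp only [offDiagSign, hpq, huv, if_false, boolSign_flipAt]
    grind

def offDiagForm (c : α → α → ℝ) (ω : α → β → Bool) : ℝ :=
  ∑ l, ∑ p, ∑ q, c p q * offDiagSign ω p q l

lemma sum_offDiagForm_sq (c : α → α → ℝ) :
    ∑ ω : α → β → Bool, offDiagForm c ω ^ 2 =
      Fintype.card (α → β → Bool) * Fintype.card β *
        ∑ p, ∑ q, if p = q then 0 else c p q * (c p q + c q p) := by
  have huncurry : ∀ ω : α → β → Bool, offDiagForm c ω =
      ∑ x : β × α × α, c x.2.1 x.2.2 * offDiagSign ω x.2.1 x.2.2 x.1 := by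
    intro ω
    simp only [offDiagForm, Fintype.sum_prod_type]
  simp only [huncurry]
  rw [sum_sq_sum_mul_eq]
  simp only [sum_offDiagSign_mul, Fintype.sum_prod_type]
  have hcollapse : ∀ (l : β) (p q : α),
      ∑ m : β, ∑ u, ∑ v, c p q * c u v *
        (if l = m ∧ p ≠ q ∧ (u = p ∧ v = q ∨ u = q ∧ v = p)
          then (Fintype.card (α → β → Bool) : ℝ) else 0) =
      Fintype.card (α → β → Bool) * (if p = q then 0 else c p q * (c p q + c q p)) := by
    intro l p q
    rw [Finset.sum_eq_single l (fun m _ hm => by simp [Ne.symm hm]) (by simp)]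
    simp only [true_and]
    have h : ∀ u v, c p q * c u v *
        (if p ≠ q ∧ (u = p ∧ v = q ∨ u = q ∧ v = p)
          then (Fintype.card (α → β → Bool) : ℝ) else 0) =
        Fintype.card (α → β → Bool) * c p q *
          (c u v * if p ≠ q ∧ (u = p ∧ v = q ∨ u = q ∧ v = p) then 1 else 0) := by
      intro u v
      split_ifs <;> ring
    simp only [h, ← Finset.mul_sum, sum_mul_ite_transpose_pair]
    split_ifs <;> ring
  simp only [hcollapse, ← Finset.mul_sum, Finset.sum_const, Finset.card_univ, nsmul_eq_mul]
  ring

lemma sum_offDiagForm_sq_le (c : α → α → ℝ) :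
    ∑ ω : α → β → Bool, offDiagForm c ω ^ 2 ≤
      Fintype.card (α → β → Bool) * Fintype.card β * (2 * ∑ p, ∑ q, c p q ^ 2) := by
  rw [sum_offDiagForm_sq]
  gcongr
  exact sum_offDiag_mul_add_transpose_le c

end RandomSign

open RandomSign

lemma frobNorm_sq {m n : ℕ} (M : Matrix (Fin m) (Fin n) ℝ) :
    frobNorm M ^ 2 = ∑ i, ∑ j, M i j ^ 2 :=
  Real.sq_sqrt (by positivity)

lemma signMatrix_mul_signMatrix_apply {d t : ℕ} (ω : Fin d → Fin t → Bool) (p q : Fin d)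
    (l : Fin t) :
    signMatrix d t ω p l * signMatrix d t ω q l =
      (t : ℝ)⁻¹ * (boolSign (ω p l) * boolSign (ω q l)) := by
  rw [signMatrix, Matrix.of_apply, Matrix.of_apply, div_mul_div_comm,
    Real.mul_self_sqrt (Nat.cast_nonneg t), div_eq_inv_mul]
  rfl

lemma signMatrix_mul_transpose {d t : ℕ} (ht : t ≠ 0) (ω : Fin d → Fin t → Bool) :
    signMatrix d t ω * (signMatrix d t ω)ᵀ =
      1 + (t : ℝ)⁻¹ • Matrix.of fun p q => ∑ l, offDiagSign ω p q l := by
  ext p q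
  simp only [Matrix.mul_apply, Matrix.transpose_apply, signMatrix_mul_signMatrix_apply,
    Matrix.add_apply, Matrix.smul_apply, smul_eq_mul, Matrix.one_apply, Matrix.of_apply,
    offDiagSign, ← Finset.mul_sum]
  split_ifs with hpq
  · simp [hpq, boolSign_mul_self, ht]
  · rw [zero_add]

lemma sub_mul_signMatrix_mul_transpose_apply {d t n k : ℕ} (ht : t ≠ 0)
    (S : Matrix (Fin n) (Fin d) ℝ) (T : Matrix (Fin d) (Fin k) ℝ) (ω : Fin d → Fin t → Bool)
    (i : Fin n) (j : Fin k) :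
    (S * T - S * signMatrix d t ω * (signMatrix d t ω)ᵀ * T) i j =
      -(t : ℝ)⁻¹ * offDiagForm (fun p q => S i p * T q j) ω := by
  rw [Matrix.mul_assoc S, signMatrix_mul_transpose ht, Matrix.mul_add, Matrix.add_mul,
    Matrix.mul_one, sub_add_cancel_left]
  simp only [Matrix.neg_apply, Matrix.mul_smul, Matrix.smul_mul, Matrix.smul_apply, smul_eq_mul,
    Matrix.mul_apply, Matrix.of_apply, offDiagForm]
  rw [neg_mul]
  congr 2
  simp only [Finset.mul_sum, Finset.sum_mul]
  simp only [mul_right_comm (S i _) (offDiagSign ω _ _ _)]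
  exact (Finset.sum_comm.trans (Finset.sum_congr rfl fun _ _ => Finset.sum_comm)).trans
    Finset.sum_comm

lemma sum_sq_mul_sq_eq_frobNorm_sq_mul_frobNorm_sq {d n k : ℕ} (S : Matrix (Fin n) (Fin d) ℝ)
    (T : Matrix (Fin d) (Fin k) ℝ) :
    ∑ i, ∑ j, ∑ p, ∑ q, (S i p * T q j) ^ 2 = frobNorm S ^ 2 * frobNorm T ^ 2 := by
  simp only [frobNorm_sq, mul_pow, ← Finset.sum_mul_sum]
  rw [Finset.sum_comm (f := fun q j => T q j ^ 2)]

lemma sum_frobNorm_sq_sub_signMatrix_le {d t n k : ℕ} (ht : t ≠ 0)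
    (S : Matrix (Fin n) (Fin d) ℝ) (T : Matrix (Fin d) (Fin k) ℝ) :
    ∑ ω, frobNorm (S * T - S * signMatrix d t ω * (signMatrix d t ω)ᵀ * T) ^ 2 ≤
      Fintype.card (Fin d → Fin t → Bool) * (2 * frobNorm S ^ 2 * frobNorm T ^ 2 / t) := by
  calc ∑ ω, frobNorm (S * T - S * signMatrix d t ω * (signMatrix d t ω)ᵀ * T) ^ 2
      = (t : ℝ)⁻¹ ^ 2 * ∑ i, ∑ j, ∑ ω, offDiagForm (fun p q => S i p * T q j) ω ^ 2 := by
        simp only [frobNorm_sq, sub_mul_signMatrix_mul_transpose_apply ht, mul_pow, neg_sq,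
          ← Finset.mul_sum]
        exact congrArg _ (Finset.sum_comm.trans (Finset.sum_congr rfl fun _ _ => Finset.sum_comm))
    _ ≤ (t : ℝ)⁻¹ ^ 2 * ∑ i, ∑ j, Fintype.card (Fin d → Fin t → Bool) * Fintype.card (Fin t) *
          (2 * ∑ p, ∑ q, (S i p * T q j) ^ 2) := by
        gcongr
        exact sum_offDiagForm_sq_le _
    _ = Fintype.card (Fin d → Fin t → Bool) * (2 * frobNorm S ^ 2 * frobNorm T ^ 2 / t) := by
        simp only [← Finset.mul_sum, sum_sq_mul_sq_eq_frobNorm_sq_mul_frobNorm_sq, Fintype.card_fin]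
        field_simp

lemma integral_frobNorm_sq_sub_signMatrix_le {d t n k : ℕ} (ht : t ≠ 0)
    (S : Matrix (Fin n) (Fin d) ℝ) (T : Matrix (Fin d) (Fin k) ℝ) :
    ∫ ω, frobNorm (S * T - S * signMatrix d t ω * (signMatrix d t ω)ᵀ * T) ^ 2 ∂signMeasure d t ≤
      2 * frobNorm S ^ 2 * frobNorm T ^ 2 / t := by
  rw [signMeasure, integral_uniformOfFintype, inv_mul_le_iff₀ (by positivity)]
  exact sum_frobNorm_sq_sub_signMatrix_le ht S T

instance isProbabilityMeasure_signMeasure (d t : ℕ) : IsProbabilityMeasure (signMeasure d t) := by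
  rw [signMeasure]
  infer_instance

/-- Markov-type tail bound for approximate matrix multiplication. -/
theorem statement11 (d t n k : ℕ) (ht : 1 ≤ t)
    (S : Matrix (Fin n) (Fin d) ℝ) (T : Matrix (Fin d) (Fin k) ℝ) (a : ℝ) (ha : 0 < a) :
    signMeasure d t
        {ω | a ≤ frobNorm (S * T - S * signMatrix d t ω * (signMatrix d t ω)ᵀ * T)}
      ≤ ENNReal.ofReal (2 * frobNorm S ^ 2 * frobNorm T ^ 2 / ((t : ℝ) * a ^ 2)) := by
  calc _ ≤ ENNReal.ofReal
        ((∫ ω, frobNorm (S * T - S * signMatrix d t ω * (signMatrix d t ω)ᵀ * T) ^ 2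
          ∂signMeasure d t) / a ^ 2) := meas_ge_le_integral_sq_div_sq _ .of_finite ha
    _ ≤ _ := by
        rw [← div_div]
        gcongr
        exact integral_frobNorm_sq_sub_signMatrix_le (Nat.one_le_iff_ne_zero.mp ht) S T
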